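/- arXiv:2212.11789 — 7 statements merged into one kernel-verified Lean document; each statement's English description precedes it below -/
import Mathlib

section
/- Let S : ℝ³ → Matrix (Fin 3) (Fin 3) ℝ be differentiable at a point q, with columns S₁(q), S₂(q), S₃(q), and denote by ∂_{qᵢ}S(q) the partial derivative of S with respect to the i-th coordinate at q. Then the following are equivalent: (b) for every v ∈ ℝ³, Σᵢ₌₁³ vᵢ ∂_{qᵢ}S(q) + [S₂(q) × S₃(q) S₃(q) × S₁(q) S₁(q) × S₂(q)] · v^× = [∂_{q₁}S(q)·v ∂_{q₂}S(q)·v ∂_{q₃}S(q)·v]; and (c) the three identities ∂_{q₂}S₁(q) − ∂_{q₁}S₂(q) = S₁(q) × S₂(q), ∂_{q₃}S₁(q) − ∂_{q₁}S₃(q) = S₁(q) × S₃(q), and ∂_{q₃}S₂(q) − ∂_{q₂}S₃(q) = S₂(q) × S₃(q) hold. -/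
open Matrix

noncomputable section

/-- Cross-product matrix `v^×` of `v ∈ ℝ³`, satisfying `crossMat v *ᵥ w = v ×₃ w`. -/
def crossMat (v : Fin 3 → ℝ) : Matrix (Fin 3) (Fin 3) ℝ :=
  !![0, -v 2, v 1; v 2, 0, -v 0; -v 1, v 0, 0]

/-- The 3×3 matrix `[u v w]` with columns `u`, `v`, `w`. -/
def colMat (u v w : Fin 3 → ℝ) : Matrix (Fin 3) (Fin 3) ℝ :=
  Matrix.of fun i j => ![u, v, w] j i

/-- `i`-th partial derivative `∂_{qᵢ} S (q)` of a matrix-valued map at `q`. -/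
def pd (i : Fin 3) (S : (Fin 3 → ℝ) → Matrix (Fin 3) (Fin 3) ℝ) (q : Fin 3 → ℝ) :
    Matrix (Fin 3) (Fin 3) ℝ :=
  Matrix.of fun j k => fderiv ℝ (fun p => S p j k) q (Pi.single i 1)

/-- `i`-th partial derivative of a vector-valued map at `q`. -/
def pdv (i : Fin 3) (f : (Fin 3 → ℝ) → (Fin 3 → ℝ)) (q : Fin 3 → ℝ) : Fin 3 → ℝ :=
  fun j => fderiv ℝ (fun p => f p j) q (Pi.single i 1)

/-- The `j`-th column `Sⱼ(q)` of `S q`. -/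
def colF (S : (Fin 3 → ℝ) → Matrix (Fin 3) (Fin 3) ℝ) (j : Fin 3) (q : Fin 3 → ℝ) :
    Fin 3 → ℝ :=
  fun i => S q i j

set_option maxHeartbeats 2000000 in
theorem stmt_3 (S : (Fin 3 → ℝ) → Matrix (Fin 3) (Fin 3) ℝ) (q : Fin 3 → ℝ)
    (hS : ∀ j k, DifferentiableAt ℝ (fun p => S p j k) q) :
    (∀ v : Fin 3 → ℝ,
        ∑ i : Fin 3, v i • pd i S q
          + colMat (colF S 1 q ⨯₃ colF S 2 q) (colF S 2 q ⨯₃ colF S 0 q)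
              (colF S 0 q ⨯₃ colF S 1 q) * crossMat v
        = colMat (pd 0 S q *ᵥ v) (pd 1 S q *ᵥ v) (pd 2 S q *ᵥ v))
    ↔
    (pdv 1 (colF S 0) q - pdv 0 (colF S 1) q = colF S 0 q ⨯₃ colF S 1 q ∧
     pdv 2 (colF S 0) q - pdv 0 (colF S 2) q = colF S 0 q ⨯₃ colF S 2 q ∧
     pdv 2 (colF S 1) q - pdv 1 (colF S 2) q = colF S 1 q ⨯₃ colF S 2 q) := by
  constructor
  · intro h
    have h1 := h (Pi.single 1 1)
    have h2 := h (Pi.single 2 1)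
    rw [← Matrix.ext_iff] at h1 h2
    simp [pd, pdv, colMat, colF, crossMat, cross_apply, Matrix.mul_apply,
      Matrix.mulVec, dotProduct, Fin.sum_univ_three, Pi.single_apply,
      Matrix.sum_apply, Fin.forall_fin_succ] at h1 h2
    obtain ⟨⟨a1, a2⟩, ⟨b1, b2⟩, ⟨c1, c2⟩⟩ := h1
    obtain ⟨⟨d1, d2⟩, ⟨e1, e2⟩, ⟨g1, g2⟩⟩ := h2
    refine ⟨?_, ?_, ?_⟩ <;> funext k <;> fin_cases k <;>
      simp [pdv, colF, cross_apply] <;> linarith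
  · rintro ⟨h1, h2, h3⟩ v
    have A0 := congrFun h1 0
    have B0 := congrFun h2 0
    have C0 := congrFun h3 0
    have A1 := congrFun h1 1
    have B1 := congrFun h2 1
    have C1 := congrFun h3 1
    have A2 := congrFun h1 2
    have B2 := congrFun h2 2
    have C2 := congrFun h3 2
    simp [pdv, colF, cross_apply] at A0 A1 A2 B0 B1 B2 C0 C1 C2
    rw [← Matrix.ext_iff]
    simp [pd, pdv, colMat, colF, crossMat, cross_apply, Matrix.mul_apply,
      Matrix.mulVec, dotProduct, Fin.sum_univ_three, Matrix.sum_apply,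
      Fin.forall_fin_succ]
    refine ⟨⟨?_, ?_, ?_⟩, ⟨?_, ?_, ?_⟩, ?_, ?_, ?_⟩
    · linear_combination v 1 * A0 + v 2 * B0
    · linear_combination -v 0 * A0 + v 2 * C0
    · linear_combination -v 0 * B0 - v 1 * C0
    · linear_combination v 1 * A1 + v 2 * B1
    · linear_combination -v 0 * A1 + v 2 * C1
    · linear_combination -v 0 * B1 - v 1 * C1
    · linear_combination v 1 * A2 + v 2 * B2
    · linear_combination -v 0 * A2 + v 2 * C2
    · linear_combination -v 0 * B2 - v 1 * C2
end
end

section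
/- Let S : ℝ³ → Matrix (Fin 3) (Fin 3) ℝ be differentiable at a point q, with columns S₁(q), S₂(q), S₃(q). Then the following are equivalent: (a) for every v ∈ ℝ³, Σᵢ₌₁³ vᵢ ∂_{qᵢ}S(q) + (S(q) v)^× · S(q) = [∂_{q₁}S(q)·v ∂_{q₂}S(q)·v ∂_{q₃}S(q)·v]; and (c) the three identities ∂_{q₂}S₁(q) − ∂_{q₁}S₂(q) = S₁(q) × S₂(q), ∂_{q₃}S₁(q) − ∂_{q₁}S₃(q) = S₁(q) × S₃(q), and ∂_{q₃}S₂(q) − ∂_{q₂}S₃(q) = S₂(q) × S₃(q) hold. -/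
open Matrix

noncomputable section

theorem stmt_4 (S : (Fin 3 → ℝ) → Matrix (Fin 3) (Fin 3) ℝ) (q : Fin 3 → ℝ)
    (hS : ∀ j k, DifferentiableAt ℝ (fun p => S p j k) q) :
    (∀ v : Fin 3 → ℝ,
        ∑ i : Fin 3, v i • pd i S q + crossMat (S q *ᵥ v) * S q
        = colMat (pd 0 S q *ᵥ v) (pd 1 S q *ᵥ v) (pd 2 S q *ᵥ v))
    ↔
    (pdv 1 (colF S 0) q - pdv 0 (colF S 1) q = colF S 0 q ⨯₃ colF S 1 q ∧
     pdv 2 (colF S 0) q - pdv 0 (colF S 2) q = colF S 0 q ⨯₃ colF S 2 q ∧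
     pdv 2 (colF S 1) q - pdv 1 (colF S 2) q = colF S 1 q ⨯₃ colF S 2 q) := by
  clear hS
  have hpdv : ∀ i j, pdv i (colF S j) q = fun k => pd i S q k j := fun _ _ => rfl
  have hcol : ∀ j, colF S j q = fun k => S q k j := fun _ => rfl
  simp only [hpdv, hcol, Fin.sum_univ_three]
  generalize pd 0 S q = D0
  generalize pd 1 S q = D1
  generalize pd 2 S q = D2
  generalize S q = M
  constructor
  · intro h
    have h0 := h ![1,0,0]
    have h1 := h ![0,1,0]
    refine ⟨?_, ?_, ?_⟩ <;> funext k <;> fin_cases k <;>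
      simp only [Pi.sub_apply, crossProduct, LinearMap.mk₂_apply, Matrix.cons_val_zero,
        Matrix.cons_val_one, Matrix.head_cons, Matrix.cons_val_two, Matrix.tail_cons,
        Fin.isValue, Fin.zero_eta, Fin.mk_one, Fin.reduceFinMk]
    · have e := congrFun (congrFun h0 0) 1
      simp [crossMat, colMat, Matrix.mulVec, Matrix.vecMul, dotProduct, Fin.sum_univ_three, Matrix.mul_apply] at e
      linear_combination -e
    · have e := congrFun (congrFun h0 1) 1
      simp [crossMat, colMat, Matrix.mulVec, Matrix.vecMul, dotProduct, Fin.sum_univ_three, Matrix.mul_apply] at e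
      linear_combination -e
    · have e := congrFun (congrFun h0 2) 1
      simp [crossMat, colMat, Matrix.mulVec, Matrix.vecMul, dotProduct, Fin.sum_univ_three, Matrix.mul_apply] at e
      linear_combination -e
    · have e := congrFun (congrFun h0 0) 2
      simp [crossMat, colMat, Matrix.mulVec, Matrix.vecMul, dotProduct, Fin.sum_univ_three, Matrix.mul_apply] at e
      linear_combination -e
    · have e := congrFun (congrFun h0 1) 2
      simp [crossMat, colMat, Matrix.mulVec, Matrix.vecMul, dotProduct, Fin.sum_univ_three, Matrix.mul_apply] at e
      linear_combination -e
    · have e := congrFun (congrFun h0 2) 2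
      simp [crossMat, colMat, Matrix.mulVec, Matrix.vecMul, dotProduct, Fin.sum_univ_three, Matrix.mul_apply] at e
      linear_combination -e
    · have e := congrFun (congrFun h1 0) 2
      simp [crossMat, colMat, Matrix.mulVec, Matrix.vecMul, dotProduct, Fin.sum_univ_three, Matrix.mul_apply] at e
      linear_combination -e
    · have e := congrFun (congrFun h1 1) 2
      simp [crossMat, colMat, Matrix.mulVec, Matrix.vecMul, dotProduct, Fin.sum_univ_three, Matrix.mul_apply] at e
      linear_combination -e
    · have e := congrFun (congrFun h1 2) 2
      simp [crossMat, colMat, Matrix.mulVec, Matrix.vecMul, dotProduct, Fin.sum_univ_three, Matrix.mul_apply] at e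
      linear_combination -e
  · rintro ⟨c1, c2, c3⟩ v
    have a1 := fun k => congrFun c1 k
    have a2 := fun k => congrFun c2 k
    have a3 := fun k => congrFun c3 k
    simp only [Pi.sub_apply, crossProduct, LinearMap.mk₂_apply, Matrix.cons_val_zero,
      Matrix.cons_val_one, Matrix.head_cons, Matrix.cons_val_two, Matrix.tail_cons,
      Fin.isValue] at a1 a2 a3
    have b1 : ∀ k : Fin 3, D1 k 0 - D0 k 1
        = ![M 1 0 * M 2 1 - M 2 0 * M 1 1, M 2 0 * M 0 1 - M 0 0 * M 2 1,
            M 0 0 * M 1 1 - M 1 0 * M 0 1] k := a1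
    have b2 : ∀ k : Fin 3, D2 k 0 - D0 k 2
        = ![M 1 0 * M 2 2 - M 2 0 * M 1 2, M 2 0 * M 0 2 - M 0 0 * M 2 2,
            M 0 0 * M 1 2 - M 1 0 * M 0 2] k := a2
    have b3 : ∀ k : Fin 3, D2 k 1 - D1 k 2
        = ![M 1 1 * M 2 2 - M 2 1 * M 1 2, M 2 1 * M 0 2 - M 0 1 * M 2 2,
            M 0 1 * M 1 2 - M 1 1 * M 0 2] k := a3
    ext j k
    fin_cases j <;> fin_cases k <;>
      simp only [crossMat, colMat, Matrix.add_apply, Matrix.smul_apply, Matrix.mul_apply,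
        Matrix.mulVec, dotProduct, Fin.sum_univ_three, Matrix.of_apply, Matrix.cons_val',
        Matrix.cons_val_zero, Matrix.cons_val_one, Matrix.head_cons, Matrix.head_fin_const,
        Matrix.cons_val_two, Matrix.tail_cons, Matrix.cons_val_fin_one, smul_eq_mul,
        Matrix.empty_val', Pi.smul_apply, Fin.isValue, Fin.zero_eta, Fin.mk_one, Fin.reduceFinMk]
    · have e1 := b1 0; have e2 := b2 0; simp at e1 e2
      linear_combination v 1 * e1 + v 2 * e2
    · have e1 := b1 0; have e3 := b3 0; simp at e1 e3
      linear_combination -v 0 * e1 + v 2 * e3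
    · have e2 := b2 0; have e3 := b3 0; simp at e2 e3
      linear_combination -v 0 * e2 - v 1 * e3
    · have e1 := b1 1; have e2 := b2 1; simp at e1 e2
      linear_combination v 1 * e1 + v 2 * e2
    · have e1 := b1 1; have e3 := b3 1; simp at e1 e3
      linear_combination -v 0 * e1 + v 2 * e3
    · have e2 := b2 1; have e3 := b3 1; simp at e2 e3
      linear_combination -v 0 * e2 - v 1 * e3
    · have e1 := b1 2; have e2 := b2 2; simp at e1 e2
      linear_combination v 1 * e1 + v 2 * e2
    · have e1 := b1 2; have e3 := b3 2; simp at e1 e3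
      linear_combination -v 0 * e1 + v 2 * e3
    · have e2 := b2 2; have e3 := b3 2; simp at e2 e3
      linear_combination -v 0 * e2 - v 1 * e3
end
end

section
/- Let S : ℝ³ → Matrix (Fin 3) (Fin 3) ℝ be differentiable at a point q with S(q) invertible, and let S₁(q), S₂(q), S₃(q) denote the columns of S(q). Then the three identities ∂_{q₂}S₁(q) − ∂_{q₁}S₂(q) = S₁(q) × S₂(q), ∂_{q₃}S₁(q) − ∂_{q₁}S₃(q) = S₁(q) × S₃(q), and ∂_{q₃}S₂(q) − ∂_{q₂}S₃(q) = S₂(q) × S₃(q) hold if and only if S(q)ᵀ · [∂_{q₃}S₂(q) − ∂_{q₂}S₃(q) ∂_{q₁}S₃(q) − ∂_{q₃}S₁(q) ∂_{q₂}S₁(q) − ∂_{q₁}S₂(q)] = det(S(q)) · I₃. -/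
open Matrix

noncomputable section

lemma key (A : Matrix (Fin 3) (Fin 3) ℝ) (hA : IsUnit A) (X Y Z : Fin 3 → ℝ) :
    (X = (fun i => A i 0) ⨯₃ (fun i => A i 1) ∧
     Y = (fun i => A i 0) ⨯₃ (fun i => A i 2) ∧
     Z = (fun i => A i 1) ⨯₃ (fun i => A i 2)) ↔
    Aᵀ * colMat Z (-Y) X = A.det • (1 : Matrix (Fin 3) (Fin 3) ℝ) := by
  set a : Fin 3 → ℝ := fun i => A i 0
  set b : Fin 3 → ℝ := fun i => A i 1
  set c : Fin 3 → ℝ := fun i => A i 2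
  have cof : Aᵀ * colMat (b ⨯₃ c) (-(a ⨯₃ c)) (a ⨯₃ b) = A.det • 1 := by
    ext i j
    fin_cases i <;> fin_cases j <;>
      simp [colMat, mul_apply, Fin.sum_univ_three, cross_apply, det_fin_three, a, b, c,
        Matrix.smul_apply, Matrix.one_apply] <;> ring
  constructor
  · rintro ⟨hX, hY, hZ⟩
    rw [hX, hY, hZ]; exact cof
  · intro h
    have hAt : IsUnit Aᵀ := by
      rw [Matrix.isUnit_iff_isUnit_det, Matrix.det_transpose,
        ← Matrix.isUnit_iff_isUnit_det]; exact hA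
    have e : colMat Z (-Y) X = colMat (b ⨯₃ c) (-(a ⨯₃ c)) (a ⨯₃ b) :=
      hAt.mul_left_cancel (h.trans cof.symm)
    refine ⟨funext fun i => ?_, funext fun i => ?_, funext fun i => ?_⟩
    · have := congrFun (congrFun e i) 2; simpa [colMat] using this
    · have := congrFun (congrFun e i) 1
      simp [colMat] at this
      rw [← cross_anticomm]
      simp only [Pi.neg_apply]
      linarith
    · have := congrFun (congrFun e i) 0; simpa [colMat] using this

theorem stmt_5 (S : (Fin 3 → ℝ) → Matrix (Fin 3) (Fin 3) ℝ) (q : Fin 3 → ℝ)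
    (hS : ∀ j k, DifferentiableAt ℝ (fun p => S p j k) q)
    (hinv : IsUnit (S q)) :
    (pdv 1 (colF S 0) q - pdv 0 (colF S 1) q = colF S 0 q ⨯₃ colF S 1 q ∧
     pdv 2 (colF S 0) q - pdv 0 (colF S 2) q = colF S 0 q ⨯₃ colF S 2 q ∧
     pdv 2 (colF S 1) q - pdv 1 (colF S 2) q = colF S 1 q ⨯₃ colF S 2 q)
    ↔
    (S q)ᵀ * colMat (pdv 2 (colF S 1) q - pdv 1 (colF S 2) q)
        (pdv 0 (colF S 2) q - pdv 2 (colF S 0) q)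
        (pdv 1 (colF S 0) q - pdv 0 (colF S 1) q)
      = (S q).det • (1 : Matrix (Fin 3) (Fin 3) ℝ) := by
  have hcol : pdv 0 (colF S 2) q - pdv 2 (colF S 0) q
      = -(pdv 2 (colF S 0) q - pdv 0 (colF S 2) q) := (neg_sub _ _).symm
  rw [hcol]
  exact key (S q) hinv _ _ _
end
end

section
/- Let S : ℝ³ → Matrix (Fin 3) (Fin 3) ℝ be differentiable at a point q with S(q) invertible, and suppose that for every v ∈ ℝ³, Σᵢ₌₁³ vᵢ ∂_{qᵢ}S(q) + (S(q) v)^× · S(q) = [∂_{q₁}S(q)·v ∂_{q₂}S(q)·v ∂_{q₃}S(q)·v]. Then for every v ∈ ℝ³, S(q)⁻ᵀ · ((Σᵢ vᵢ ∂_{qᵢ}S(q))ᵀ − the 3×3 matrix whose i-th row is vᵀ (∂_{qᵢ}S(q))ᵀ) = (S(q) v)^×, where S(q)⁻ᵀ denotes the inverse of the transpose of S(q). -/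
open Matrix

noncomputable section

theorem stmt_6 (S : (Fin 3 → ℝ) → Matrix (Fin 3) (Fin 3) ℝ) (q : Fin 3 → ℝ)
    (hS : ∀ j k, DifferentiableAt ℝ (fun p => S p j k) q)
    (hinv : IsUnit (S q))
    (ha : ∀ v : Fin 3 → ℝ,
        ∑ i : Fin 3, v i • pd i S q + crossMat (S q *ᵥ v) * S q
        = colMat (pd 0 S q *ᵥ v) (pd 1 S q *ᵥ v) (pd 2 S q *ᵥ v)) :
    ∀ v : Fin 3 → ℝ,
      ((S q)ᵀ)⁻¹ * ((∑ i : Fin 3, v i • pd i S q)ᵀ - Matrix.of (fun i => pd i S q *ᵥ v))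
        = crossMat (S q *ᵥ v) := by
  intro v
  set A := S q with hA
  set X := crossMat (A *ᵥ v) with hX
  have hskew : Xᵀ = -X := by
    ext i j
    fin_cases i <;> fin_cases j <;> simp [hX, crossMat]
  have hM : (Matrix.of (fun i => pd i S q *ᵥ v) : Matrix (Fin 3) (Fin 3) ℝ)
      = (colMat (pd 0 S q *ᵥ v) (pd 1 S q *ᵥ v) (pd 2 S q *ᵥ v))ᵀ := by
    ext i j
    fin_cases i <;> simp [colMat, Matrix.transpose_apply]
  have h := ha v
  have hsum : (∑ i : Fin 3, v i • pd i S q)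
      = colMat (pd 0 S q *ᵥ v) (pd 1 S q *ᵥ v) (pd 2 S q *ᵥ v) - X * A :=
    eq_sub_of_add_eq h
  have key : (∑ i : Fin 3, v i • pd i S q)ᵀ - Matrix.of (fun i => pd i S q *ᵥ v)
      = Aᵀ * X := by
    rw [hsum, hM, Matrix.transpose_sub, Matrix.transpose_mul, hskew]
    rw [Matrix.mul_neg]
    abel
  rw [key, ← Matrix.mul_assoc, Matrix.nonsing_inv_mul, Matrix.one_mul]
  rw [Matrix.isUnit_iff_isUnit_det] at hinv
  simpa using hinv
end
end

section
/- Let S : ℝ³ → Matrix (Fin 3) (Fin 3) ℝ be differentiable at a point q with S(q) invertible, suppose the three identities ∂_{q₂}S₁(q) − ∂_{q₁}S₂(q) = S₁(q) × S₂(q), ∂_{q₃}S₁(q) − ∂_{q₁}S₃(q) = S₁(q) × S₃(q), and ∂_{q₃}S₂(q) − ∂_{q₂}S₃(q) = S₂(q) × S₃(q) hold, and let J be any 3×3 real matrix. Then for every v ∈ ℝ³, writing ω = S(q) v and Ṡ = Σᵢ₌₁³ vᵢ ∂_{qᵢ}S(q), one has S(q)⁻ᵀ · ( Ṡᵀ J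 S(q) v − the vector in ℝ³ whose i-th entry is vᵀ (∂_{qᵢ}S(q))ᵀ J S(q) v ) = ω × (J ω). -/
open Matrix

noncomputable section

theorem stmt_7 (S : (Fin 3 → ℝ) → Matrix (Fin 3) (Fin 3) ℝ) (q : Fin 3 → ℝ)
    (hS : ∀ j k, DifferentiableAt ℝ (fun p => S p j k) q)
    (hinv : IsUnit (S q))
    (hc : pdv 1 (colF S 0) q - pdv 0 (colF S 1) q = colF S 0 q ⨯₃ colF S 1 q ∧
          pdv 2 (colF S 0) q - pdv 0 (colF S 2) q = colF S 0 q ⨯₃ colF S 2 q ∧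
          pdv 2 (colF S 1) q - pdv 1 (colF S 2) q = colF S 1 q ⨯₃ colF S 2 q)
    (J : Matrix (Fin 3) (Fin 3) ℝ) :
    ∀ v : Fin 3 → ℝ,
      ((S q)ᵀ)⁻¹ *ᵥ
          ((∑ i : Fin 3, v i • pd i S q)ᵀ *ᵥ (J *ᵥ (S q *ᵥ v))
            - (fun i => (pd i S q *ᵥ v) ⬝ᵥ (J *ᵥ (S q *ᵥ v))))
        = (S q *ᵥ v) ⨯₃ (J *ᵥ (S q *ᵥ v)) := by

  obtain ⟨h1, h2, h3⟩ := hc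
  intro v
  have hdet : ((S q)ᵀ)⁻¹ * (S q)ᵀ = 1 :=
    Matrix.nonsing_inv_mul _ (by
      simpa [Matrix.det_transpose] using (Matrix.isUnit_iff_isUnit_det _).1 hinv)
  have key : ∀ w : Fin 3 → ℝ,
      (∑ i : Fin 3, v i • pd i S q)ᵀ *ᵥ w
        - (fun i => (pd i S q *ᵥ v) ⬝ᵥ w)
        = (S q)ᵀ *ᵥ ((S q *ᵥ v) ⨯₃ w) := by
    intro w
    have mk : ∀ h0 h1 h2, (⟨0, h0⟩ : Fin 3) = 0 ∧ (⟨1, h1⟩ : Fin 3) = 1 ∧ (⟨2, h2⟩ : Fin 3) = 2 :=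
      fun _ _ _ => ⟨rfl, rfl, rfl⟩
    have e1 : ∀ k, _ := fun k => congrFun h1 k
    have e2 : ∀ k, _ := fun k => congrFun h2 k
    have e3 : ∀ k, _ := fun k => congrFun h3 k
    simp only [pdv, colF, Pi.sub_apply, crossProduct, LinearMap.mk₂_apply] at e1 e2 e3
    funext j
    fin_cases j <;>
      simp only [pd, Matrix.sub_apply, Matrix.add_apply, Matrix.transpose_apply, Matrix.mulVec,
        dotProduct, Fin.sum_univ_three, Matrix.of_apply, Pi.sub_apply,
        Finset.sum_apply, Matrix.sum_apply, Pi.smul_apply, Matrix.smul_apply,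
        smul_eq_mul, crossProduct, LinearMap.mk₂_apply, (mk (by omega) (by omega) (by omega)).1,
        (mk (by omega) (by omega) (by omega)).2.1, (mk (by omega) (by omega) (by omega)).2.2,
        Matrix.cons_val_zero, Matrix.cons_val_one, Matrix.head_cons,
        Matrix.cons_val_two, Matrix.tail_cons, Fin.isValue]
    · linear_combination (norm := (simp only [Matrix.cons_val_zero, Matrix.cons_val_one,
        Matrix.head_cons, Matrix.cons_val_two, Matrix.tail_cons]; ring1))
        (v 1 * w 0) * e1 0 + (v 1 * w 1) * e1 1 + (v 1 * w 2) * e1 2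
        + (v 2 * w 0) * e2 0 + (v 2 * w 1) * e2 1 + (v 2 * w 2) * e2 2
    · linear_combination (norm := (simp only [Matrix.cons_val_zero, Matrix.cons_val_one,
        Matrix.head_cons, Matrix.cons_val_two, Matrix.tail_cons]; ring1))
        (-(v 0) * w 0) * e1 0 + (-(v 0) * w 1) * e1 1 + (-(v 0) * w 2) * e1 2
        + (v 2 * w 0) * e3 0 + (v 2 * w 1) * e3 1 + (v 2 * w 2) * e3 2
    · linear_combination (norm := (simp only [Matrix.cons_val_zero, Matrix.cons_val_one,
        Matrix.head_cons, Matrix.cons_val_two, Matrix.tail_cons]; ring1))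
        (-(v 0) * w 0) * e2 0 + (-(v 0) * w 1) * e2 1 + (-(v 0) * w 2) * e2 2
        + (-(v 1) * w 0) * e3 0 + (-(v 1) * w 1) * e3 1 + (-(v 1) * w 2) * e3 2
  rw [key, Matrix.mulVec_mulVec, hdet, Matrix.one_mulVec]
end
end

section
/- Let J be a symmetric 3×3 real matrix, let S : ℝ³ → Matrix (Fin 3) (Fin 3) ℝ be continuously differentiable and satisfy at every point q the identities ∂_{q₂}S₁(q) − ∂_{q₁}S₂(q) = S₁(q) × S₂(q), ∂_{q₃}S₁(q) − ∂_{q₁}S₃(q) = S₁(q) × S₃(q), ∂_{q₃}S₂(q) − ∂_{q₂}S₃(q) = S₂(q) × S₃(q), and let q : ℝ → ℝ³ be twice differentiable. Define the angular velocity ω(t) = S(q(t)) q̇(t) and the kinetic energy T(p, v) = ½ (S(p) v)ᵀ J (S(p) v) for p, v ∈ ℝ³. Then for every t, (d/dt)[∇_v T(q(t), q̇(t))] − ∇_p T(q(t), q̇(t)) = S(q(t))ᵀ ( J ω̇(t) + ω(t) × (J ω(t)) ), where ∇_v T and ∇_p T denote the gradients of T with respect to its second and first arguments, respectively. -/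
open Matrix

noncomputable section

/-- Kinetic energy `T(p, v) = ½ (S(p) v)ᵀ J (S(p) v)`. -/
def kinEnergy (J : Matrix (Fin 3) (Fin 3) ℝ) (S : (Fin 3 → ℝ) → Matrix (Fin 3) (Fin 3) ℝ)
    (p v : Fin 3 → ℝ) : ℝ :=
  (1 / 2) * ((S p *ᵥ v) ⬝ᵥ (J *ᵥ (S p *ᵥ v)))

/-- Gradient of `T` with respect to its second argument `v`. -/
def gradV (J : Matrix (Fin 3) (Fin 3) ℝ) (S : (Fin 3 → ℝ) → Matrix (Fin 3) (Fin 3) ℝ)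
    (p v : Fin 3 → ℝ) : Fin 3 → ℝ :=
  fun i => fderiv ℝ (fun w => kinEnergy J S p w) v (Pi.single i 1)

/-- Gradient of `T` with respect to its first argument `p`. -/
def gradP (J : Matrix (Fin 3) (Fin 3) ℝ) (S : (Fin 3 → ℝ) → Matrix (Fin 3) (Fin 3) ℝ)
    (p v : Fin 3 → ℝ) : Fin 3 → ℝ :=
  fun i => fderiv ℝ (fun w => kinEnergy J S w v) p (Pi.single i 1)

/-- Auxiliary: projection as a continuous linear map. -/
abbrev prjCLM (b : Fin 3) : (Fin 3 → ℝ) →L[ℝ] ℝ := ContinuousLinearMap.proj b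

lemma hasFDerivAt_quad (c : Fin 3 → Fin 3 → ℝ) (v : Fin 3 → ℝ) :
    HasFDerivAt (fun w : Fin 3 → ℝ => ∑ a, ∑ b, c a b * (w a * w b))
      (∑ a, ∑ b, c a b • (v a • prjCLM b + v b • prjCLM a)) v := by
  apply HasFDerivAt.fun_sum; intro a _
  apply HasFDerivAt.fun_sum; intro b _
  exact ((hasFDerivAt_apply a v).mul (hasFDerivAt_apply b v)).const_mul (c a b)

lemma quad_fderiv_apply (c : Fin 3 → Fin 3 → ℝ) (v : Fin 3 → ℝ) (i : Fin 3) :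
    fderiv ℝ (fun w : Fin 3 → ℝ => ∑ a, ∑ b, c a b * (w a * w b)) v (Pi.single i 1)
      = (∑ b, c i b * v b) + ∑ a, c a i * v a := by
  rw [(hasFDerivAt_quad c v).fderiv]
  fin_cases i <;>
    simp [Fin.sum_univ_three, Pi.single_apply] <;> ring

lemma gradV_eq (J : Matrix (Fin 3) (Fin 3) ℝ) (hJ : Jᵀ = J)
    (S : (Fin 3 → ℝ) → Matrix (Fin 3) (Fin 3) ℝ) (p v : Fin 3 → ℝ) :
    gradV J S p v = fun i => ∑ a, S p a i * ∑ b, J a b * ∑ c, S p b c * v c := by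
  have hsym : ∀ a b, J a b = J b a := fun a b => by
    have := congrFun (congrFun hJ b) a
    rwa [Matrix.transpose_apply] at this
  have hfun : (fun w => kinEnergy J S p w)
      = fun w : Fin 3 → ℝ => ∑ a, ∑ b,
          (∑ x, ∑ y, (1/2) * (S p x a * (J x y * S p y b))) * (w a * w b) := by
    funext w
    simp [kinEnergy, mulVec, dotProduct, Fin.sum_univ_three]
    ring
  funext i
  rw [gradV, hfun, quad_fderiv_apply]
  fin_cases i <;> simp [Fin.sum_univ_three] <;>
    rw [hsym 1 0, hsym 2 0, hsym 2 1] <;> ring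

lemma gradP_eq (J : Matrix (Fin 3) (Fin 3) ℝ) (hJ : Jᵀ = J)
    (S : (Fin 3 → ℝ) → Matrix (Fin 3) (Fin 3) ℝ)
    (hS : ∀ j k, ContDiff ℝ 1 (fun p => S p j k)) (p v : Fin 3 → ℝ) :
    gradP J S p v = fun i =>
      ∑ a, (∑ c, fderiv ℝ (fun p' => S p' a c) p (Pi.single i 1) * v c)
        * (∑ b, J a b * ∑ d, S p b d * v d) := by
  have hsym : ∀ a b, J a b = J b a := fun a b => by
    have := congrFun (congrFun hJ b) a
    rwa [Matrix.transpose_apply] at this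
  set g : Fin 3 → (Fin 3 → ℝ) → ℝ := fun a p' => ∑ c, S p' a c * v c with hg
  set g' : Fin 3 → ((Fin 3 → ℝ) →L[ℝ] ℝ) :=
    fun a => ∑ c, v c • fderiv ℝ (fun p' => S p' a c) p with hg'
  have hgd : ∀ a, HasFDerivAt (g a) (g' a) p := by
    intro a
    exact HasFDerivAt.fun_sum fun c _ =>
      (((hS a c).differentiable one_ne_zero).differentiableAt.hasFDerivAt).mul_const (v c)
  have hF : HasFDerivAt (fun p' => kinEnergy J S p' v)
      (∑ a, ∑ b, ((1/2) * J a b) • (g a p • g' b + g b p • g' a)) p := by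
    have hfun : (fun p' => kinEnergy J S p' v)
        = fun p' => ∑ a, ∑ b, ((1/2) * J a b) * (g a p' * g b p') := by
      funext w
      simp [kinEnergy, mulVec, dotProduct, Fin.sum_univ_three, hg]
      ring
    rw [hfun]
    exact HasFDerivAt.fun_sum fun a _ => HasFDerivAt.fun_sum fun b _ =>
      ((hgd a).mul (hgd b)).const_mul _
  funext i
  rw [gradP, hF.fderiv]
  simp only [ContinuousLinearMap.sum_apply, ContinuousLinearMap.smul_apply,
    ContinuousLinearMap.add_apply, smul_eq_mul, hg, hg']
  rw [Fin.sum_univ_three, Fin.sum_univ_three]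
  simp only [Fin.sum_univ_three]
  rw [hsym 1 0, hsym 2 0, hsym 2 1]
  ring


set_option maxHeartbeats 1000000 in
lemma key_s8 (J M : Matrix (Fin 3) (Fin 3) ℝ) (D : Fin 3 → Fin 3 → Fin 3 → ℝ)
    (v u : Fin 3 → ℝ)
    (h010 : D 0 0 1 = D 1 0 0 - (M 1 0 * M 2 1 - M 2 0 * M 1 1))
    (h011 : D 0 1 1 = D 1 1 0 - (M 2 0 * M 0 1 - M 0 0 * M 2 1))
    (h012 : D 0 2 1 = D 1 2 0 - (M 0 0 * M 1 1 - M 1 0 * M 0 1))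
    (h020 : D 0 0 2 = D 2 0 0 - (M 1 0 * M 2 2 - M 2 0 * M 1 2))
    (h021 : D 0 1 2 = D 2 1 0 - (M 2 0 * M 0 2 - M 0 0 * M 2 2))
    (h022 : D 0 2 2 = D 2 2 0 - (M 0 0 * M 1 2 - M 1 0 * M 0 2))
    (h120 : D 1 0 2 = D 2 0 1 - (M 1 1 * M 2 2 - M 2 1 * M 1 2))
    (h121 : D 1 1 2 = D 2 1 1 - (M 2 1 * M 0 2 - M 0 1 * M 2 2))
    (h122 : D 1 2 2 = D 2 2 1 - (M 0 1 * M 1 2 - M 1 1 * M 0 2)) :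
    (fun k => ∑ a, ((∑ i, v i * D i a k) * (∑ b, J a b * ∑ c, M b c * v c)
        + M a k * (∑ b, J a b * ∑ c, ((∑ i, v i * D i b c) * v c + M b c * u c))))
      - (fun k => ∑ a, (∑ c, D k a c * v c) * (∑ b, J a b * ∑ d, M b d * v d))
      = Mᵀ *ᵥ (J *ᵥ (fun a => ∑ c, ((∑ i, v i * D i a c) * v c + M a c * u c))
          + (M *ᵥ v) ⨯₃ (J *ᵥ (M *ᵥ v))) := by
  have comp : ∀ k : Fin 3,
      (∑ a, ((∑ i, v i * D i a k) * (∑ b, J a b * ∑ c, M b c * v c)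
        + M a k * (∑ b, J a b * ∑ c, ((∑ i, v i * D i b c) * v c + M b c * u c))))
      - (∑ a, (∑ c, D k a c * v c) * (∑ b, J a b * ∑ d, M b d * v d))
      = (Mᵀ *ᵥ (J *ᵥ (fun a => ∑ c, ((∑ i, v i * D i a c) * v c + M a c * u c))
          + (M *ᵥ v) ⨯₃ (J *ᵥ (M *ᵥ v)))) k := by
    intro k
    fin_cases k
    · simp only [mulVec, dotProduct, transpose_apply, Pi.add_apply,
        cross_apply, Fin.sum_univ_three, Matrix.cons_val_zero,
        Matrix.cons_val_one, Matrix.head_cons, Matrix.cons_val_two, Matrix.tail_cons,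
        Fin.zero_eta, Fin.mk_one]
      rw [h010, h011, h012, h020, h021, h022, h120, h121, h122]
      ring
    · simp only [mulVec, dotProduct, transpose_apply, Pi.add_apply,
        cross_apply, Fin.sum_univ_three, Matrix.cons_val_zero,
        Matrix.cons_val_one, Matrix.head_cons, Matrix.cons_val_two, Matrix.tail_cons,
        Fin.zero_eta, Fin.mk_one]
      rw [h010, h011, h012, h020, h021, h022, h120, h121, h122]
      ring
    · show (∑ a, ((∑ i, v i * D i a 2) * (∑ b, J a b * ∑ c, M b c * v c)
        + M a 2 * (∑ b, J a b * ∑ c, ((∑ i, v i * D i b c) * v c + M b c * u c))))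
      - (∑ a, (∑ c, D 2 a c * v c) * (∑ b, J a b * ∑ d, M b d * v d))
      = (Mᵀ *ᵥ (J *ᵥ (fun a => ∑ c, ((∑ i, v i * D i a c) * v c + M a c * u c))
          + (M *ᵥ v) ⨯₃ (J *ᵥ (M *ᵥ v)))) 2
      simp only [mulVec, dotProduct, transpose_apply, Pi.add_apply,
        cross_apply, Fin.sum_univ_three, Matrix.cons_val_zero,
        Matrix.cons_val_one, Matrix.head_cons, Matrix.cons_val_two, Matrix.tail_cons]
      rw [h010, h011, h012, h020, h021, h022, h120, h121, h122]
      ring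
  funext k
  exact (Pi.sub_apply _ _ k).trans (comp k)

set_option maxHeartbeats 2000000 in
theorem stmt_8 (J : Matrix (Fin 3) (Fin 3) ℝ) (hJ : Jᵀ = J)
    (S : (Fin 3 → ℝ) → Matrix (Fin 3) (Fin 3) ℝ)
    (hS : ∀ j k, ContDiff ℝ 1 (fun p => S p j k))
    (hc : ∀ q : Fin 3 → ℝ,
        pdv 1 (colF S 0) q - pdv 0 (colF S 1) q = colF S 0 q ⨯₃ colF S 1 q ∧
        pdv 2 (colF S 0) q - pdv 0 (colF S 2) q = colF S 0 q ⨯₃ colF S 2 q ∧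
        pdv 2 (colF S 1) q - pdv 1 (colF S 2) q = colF S 1 q ⨯₃ colF S 2 q)
    (q : ℝ → Fin 3 → ℝ) (hq : Differentiable ℝ q) (hq' : Differentiable ℝ (deriv q)) :
    ∀ t : ℝ,
      deriv (fun s => gradV J S (q s) (deriv q s)) t - gradP J S (q t) (deriv q t)
        = (S (q t))ᵀ *ᵥ
            (J *ᵥ deriv (fun s => S (q s) *ᵥ deriv q s) t
              + (S (q t) *ᵥ deriv q t) ⨯₃ (J *ᵥ (S (q t) *ᵥ deriv q t))) := by
  intro t
  have hqd : HasDerivAt q (deriv q t) t := (hq t).hasDerivAt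
  have hacc : ∀ c, HasDerivAt (fun s => deriv q s c) (deriv (deriv q) t c) t :=
    fun c => hasDerivAt_pi.mp (hq' t).hasDerivAt c
  -- derivative of entries of S ∘ q
  have hσ : ∀ a b, HasDerivAt (fun s => S (q s) a b)
      (∑ i, deriv q t i * fderiv ℝ (fun p => S p a b) (q t) (Pi.single i 1)) t := by
    intro a b
    have hd := (((hS a b).differentiable one_ne_zero).differentiableAt (x := q t)).hasFDerivAt
    have h := hd.comp_hasDerivAt t hqd
    have hval : fderiv ℝ (fun p => S p a b) (q t) (deriv q t)
        = ∑ i, deriv q t i * fderiv ℝ (fun p => S p a b) (q t) (Pi.single i 1) := by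
      set L := fderiv ℝ (fun p => S p a b) (q t)
      conv_lhs => rw [← Finset.univ_sum_single (deriv q t)]
      rw [map_sum]
      refine Finset.sum_congr rfl fun i _ => ?_
      have : Pi.single i (deriv q t i) = deriv q t i • (Pi.single i (1:ℝ) : Fin 3 → ℝ) := by
        rw [← Pi.single_smul, smul_eq_mul, mul_one]
      rw [this, L.map_smul, smul_eq_mul]
    rw [hval] at h
    exact h
  -- derivative of ω = S(q s) q̇(s)
  have hω : HasDerivAt (fun s => S (q s) *ᵥ deriv q s)
      (fun a => ∑ c, ((∑ i, deriv q t i * fderiv ℝ (fun p => S p a c) (q t) (Pi.single i 1))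
          * deriv q t c + S (q t) a c * deriv (deriv q) t c)) t := by
    rw [hasDerivAt_pi]
    intro a
    have hfun : (fun s => (S (q s) *ᵥ deriv q s) a)
        = fun s => ∑ c, S (q s) a c * deriv q s c := by
      funext s; simp [mulVec, dotProduct]
    rw [hfun]
    exact HasDerivAt.fun_sum fun c _ => (hσ a c).mul (hacc c)
  -- derivative of ∇_v T along the trajectory
  have hGVfun : (fun s => gradV J S (q s) (deriv q s))
      = fun s => (fun k => ∑ a, S (q s) a k * ∑ b, J a b * ∑ c, S (q s) b c * deriv q s c) :=
    funext fun s => gradV_eq J hJ S (q s) (deriv q s)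
  have hGV : HasDerivAt
      (fun s => (fun k => ∑ a, S (q s) a k * ∑ b, J a b * ∑ c, S (q s) b c * deriv q s c))
      (fun k => ∑ a,
        ((∑ i, deriv q t i * fderiv ℝ (fun p => S p a k) (q t) (Pi.single i 1))
            * (∑ b, J a b * ∑ c, S (q t) b c * deriv q t c)
          + S (q t) a k * (∑ b, J a b *
              ∑ c, ((∑ i, deriv q t i * fderiv ℝ (fun p => S p b c) (q t) (Pi.single i 1))
                  * deriv q t c + S (q t) b c * deriv (deriv q) t c)))) t := by
    rw [hasDerivAt_pi]
    intro k
    exact HasDerivAt.fun_sum fun a _ => (hσ a k).mul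
      (HasDerivAt.fun_sum fun b _ => HasDerivAt.const_mul (J a b)
        (HasDerivAt.fun_sum fun c _ => (hσ b c).mul (hacc c)))
  have hd1 : deriv (fun s => gradV J S (q s) (deriv q s)) t
      = (fun k => ∑ a,
        ((∑ i, deriv q t i * fderiv ℝ (fun p => S p a k) (q t) (Pi.single i 1))
            * (∑ b, J a b * ∑ c, S (q t) b c * deriv q t c)
          + S (q t) a k * (∑ b, J a b *
              ∑ c, ((∑ i, deriv q t i * fderiv ℝ (fun p => S p b c) (q t) (Pi.single i 1))
                  * deriv q t c + S (q t) b c * deriv (deriv q) t c)))) := by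
    rw [hGVfun]; exact hGV.deriv
  have hd2 : deriv (fun s => S (q s) *ᵥ deriv q s) t
      = fun a => ∑ c, ((∑ i, deriv q t i * fderiv ℝ (fun p => S p a c) (q t) (Pi.single i 1))
          * deriv q t c + S (q t) a c * deriv (deriv q) t c) := hω.deriv
  have h010 : fderiv ℝ (fun p => S p 0 1) (q t) (Pi.single 0 1)
      = fderiv ℝ (fun p => S p 0 0) (q t) (Pi.single 1 1)
        - (S (q t) 1 0 * S (q t) 2 1 - S (q t) 2 0 * S (q t) 1 1) := by
    have h := congrFun (hc (q t)).1 0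
    simp only [Pi.sub_apply, pdv, colF, cross_apply, Matrix.cons_val_zero,
      Matrix.cons_val_one, Matrix.head_cons, Matrix.cons_val_two, Matrix.tail_cons] at h
    linarith
  have h011 : fderiv ℝ (fun p => S p 1 1) (q t) (Pi.single 0 1)
      = fderiv ℝ (fun p => S p 1 0) (q t) (Pi.single 1 1)
        - (S (q t) 2 0 * S (q t) 0 1 - S (q t) 0 0 * S (q t) 2 1) := by
    have h := congrFun (hc (q t)).1 1
    simp only [Pi.sub_apply, pdv, colF, cross_apply, Matrix.cons_val_zero,
      Matrix.cons_val_one, Matrix.head_cons, Matrix.cons_val_two, Matrix.tail_cons] at h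
    linarith
  have h012 : fderiv ℝ (fun p => S p 2 1) (q t) (Pi.single 0 1)
      = fderiv ℝ (fun p => S p 2 0) (q t) (Pi.single 1 1)
        - (S (q t) 0 0 * S (q t) 1 1 - S (q t) 1 0 * S (q t) 0 1) := by
    have h := congrFun (hc (q t)).1 2
    simp only [Pi.sub_apply, pdv, colF, cross_apply, Matrix.cons_val_zero,
      Matrix.cons_val_one, Matrix.head_cons, Matrix.cons_val_two, Matrix.tail_cons] at h
    linarith
  have h020 : fderiv ℝ (fun p => S p 0 2) (q t) (Pi.single 0 1)
      = fderiv ℝ (fun p => S p 0 0) (q t) (Pi.single 2 1)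
        - (S (q t) 1 0 * S (q t) 2 2 - S (q t) 2 0 * S (q t) 1 2) := by
    have h := congrFun (hc (q t)).2.1 0
    simp only [Pi.sub_apply, pdv, colF, cross_apply, Matrix.cons_val_zero,
      Matrix.cons_val_one, Matrix.head_cons, Matrix.cons_val_two, Matrix.tail_cons] at h
    linarith
  have h021 : fderiv ℝ (fun p => S p 1 2) (q t) (Pi.single 0 1)
      = fderiv ℝ (fun p => S p 1 0) (q t) (Pi.single 2 1)
        - (S (q t) 2 0 * S (q t) 0 2 - S (q t) 0 0 * S (q t) 2 2) := by
    have h := congrFun (hc (q t)).2.1 1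
    simp only [Pi.sub_apply, pdv, colF, cross_apply, Matrix.cons_val_zero,
      Matrix.cons_val_one, Matrix.head_cons, Matrix.cons_val_two, Matrix.tail_cons] at h
    linarith
  have h022 : fderiv ℝ (fun p => S p 2 2) (q t) (Pi.single 0 1)
      = fderiv ℝ (fun p => S p 2 0) (q t) (Pi.single 2 1)
        - (S (q t) 0 0 * S (q t) 1 2 - S (q t) 1 0 * S (q t) 0 2) := by
    have h := congrFun (hc (q t)).2.1 2
    simp only [Pi.sub_apply, pdv, colF, cross_apply, Matrix.cons_val_zero,
      Matrix.cons_val_one, Matrix.head_cons, Matrix.cons_val_two, Matrix.tail_cons] at h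
    linarith
  have h120 : fderiv ℝ (fun p => S p 0 2) (q t) (Pi.single 1 1)
      = fderiv ℝ (fun p => S p 0 1) (q t) (Pi.single 2 1)
        - (S (q t) 1 1 * S (q t) 2 2 - S (q t) 2 1 * S (q t) 1 2) := by
    have h := congrFun (hc (q t)).2.2 0
    simp only [Pi.sub_apply, pdv, colF, cross_apply, Matrix.cons_val_zero,
      Matrix.cons_val_one, Matrix.head_cons, Matrix.cons_val_two, Matrix.tail_cons] at h
    linarith
  have h121 : fderiv ℝ (fun p => S p 1 2) (q t) (Pi.single 1 1)
      = fderiv ℝ (fun p => S p 1 1) (q t) (Pi.single 2 1)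
        - (S (q t) 2 1 * S (q t) 0 2 - S (q t) 0 1 * S (q t) 2 2) := by
    have h := congrFun (hc (q t)).2.2 1
    simp only [Pi.sub_apply, pdv, colF, cross_apply, Matrix.cons_val_zero,
      Matrix.cons_val_one, Matrix.head_cons, Matrix.cons_val_two, Matrix.tail_cons] at h
    linarith
  have h122 : fderiv ℝ (fun p => S p 2 2) (q t) (Pi.single 1 1)
      = fderiv ℝ (fun p => S p 2 1) (q t) (Pi.single 2 1)
        - (S (q t) 0 1 * S (q t) 1 2 - S (q t) 1 1 * S (q t) 0 2) := by
    have h := congrFun (hc (q t)).2.2 2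
    simp only [Pi.sub_apply, pdv, colF, cross_apply, Matrix.cons_val_zero,
      Matrix.cons_val_one, Matrix.head_cons, Matrix.cons_val_two, Matrix.tail_cons] at h
    linarith
  rw [hd1, hd2, gradP_eq J hJ S hS (q t) (deriv q t)]
  exact key_s8 J (S (q t)) (fun i a b => fderiv ℝ (fun p => S p a b) (q t) (Pi.single i 1))
    (deriv q t) (deriv (deriv q) t) h010 h011 h012 h020 h021 h022 h120 h121 h122
end
end

section
/- Let q = (Φ, Θ, Ψ) and let S(q) be the 3-2-1 Euler-angle kinematics matrix S(Φ, Θ) = ![![1, 0, −sin Θ], ![0, cos Φ, sin Φ · cos Θ], ![0, −sin Φ, cos Φ · cos Θ]]. Then for every q with cos Θ ≠ 0 and every v ∈ ℝ³, Σᵢ₌₁³ vᵢ ∂_{qᵢ}S(q) + (S(q) v)^× · S(q) = [∂_{q₁}S(q)·v ∂_{q₂}S(q)·v ∂_{q₃}S(q)·v]. -/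
open Matrix

noncomputable section

/-- The 3-2-1 Euler-angle kinematics matrix, as a function of `q = (Φ, Θ, Ψ)`. -/
def S321 (q : Fin 3 → ℝ) : Matrix (Fin 3) (Fin 3) ℝ :=
  !![1, 0, -Real.sin (q 1);
     0, Real.cos (q 0), Real.sin (q 0) * Real.cos (q 1);
     0, -Real.sin (q 0), Real.cos (q 0) * Real.cos (q 1)]

section helpers
variable (q : Fin 3 → ℝ)

lemma hp (j : Fin 3) : HasFDerivAt (fun p : Fin 3 → ℝ => p j)
    (ContinuousLinearMap.proj (R := ℝ) (φ := fun _ : Fin 3 => ℝ) j) q := hasFDerivAt_apply j q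

lemma hsin (j : Fin 3) : HasFDerivAt (fun p : Fin 3 → ℝ => Real.sin (p j))
    (Real.cos (q j) • ContinuousLinearMap.proj (R := ℝ) (φ := fun _ : Fin 3 => ℝ) j) q :=
  (Real.hasDerivAt_sin (q j)).comp_hasFDerivAt (f := fun p : Fin 3 → ℝ => p j) q (hp q j)

lemma hcos (j : Fin 3) : HasFDerivAt (fun p : Fin 3 → ℝ => Real.cos (p j))
    ((-Real.sin (q j)) • ContinuousLinearMap.proj (R := ℝ) (φ := fun _ : Fin 3 => ℝ) j) q :=
  (Real.hasDerivAt_cos (q j)).comp_hasFDerivAt (f := fun p : Fin 3 → ℝ => p j) q (hp q j)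

lemma fd_sin (i j : Fin 3) :
    fderiv ℝ (fun p : Fin 3 → ℝ => Real.sin (p j)) q (Pi.single i 1)
      = Real.cos (q j) * (Pi.single i 1 : Fin 3 → ℝ) j := by
  rw [(hsin q j).fderiv]; simp

lemma fd_cos (i j : Fin 3) :
    fderiv ℝ (fun p : Fin 3 → ℝ => Real.cos (p j)) q (Pi.single i 1)
      = -Real.sin (q j) * (Pi.single i 1 : Fin 3 → ℝ) j := by
  rw [(hcos q j).fderiv]; simp

lemma fd_neg_sin (i j : Fin 3) :
    fderiv ℝ (fun p : Fin 3 → ℝ => -Real.sin (p j)) q (Pi.single i 1)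
      = -(Real.cos (q j) * (Pi.single i 1 : Fin 3 → ℝ) j) := by
  rw [HasFDerivAt.fderiv (f := fun p : Fin 3 → ℝ => -Real.sin (p j)) ((hsin q j).neg)]; simp

lemma fd_sin_cos (i : Fin 3) (a b : Fin 3) :
    fderiv ℝ (fun p : Fin 3 → ℝ => Real.sin (p a) * Real.cos (p b)) q (Pi.single i 1)
      = Real.cos (q a) * (Pi.single i 1 : Fin 3 → ℝ) a * Real.cos (q b)
        + Real.sin (q a) * (-Real.sin (q b) * (Pi.single i 1 : Fin 3 → ℝ) b) := by
  rw [HasFDerivAt.fderiv (f := fun p : Fin 3 → ℝ => Real.sin (p a) * Real.cos (p b)) ((hsin q a).mul (hcos q b))]; simp; ring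

lemma fd_cos_cos (i : Fin 3) (a b : Fin 3) :
    fderiv ℝ (fun p : Fin 3 → ℝ => Real.cos (p a) * Real.cos (p b)) q (Pi.single i 1)
      = -Real.sin (q a) * (Pi.single i 1 : Fin 3 → ℝ) a * Real.cos (q b)
        + Real.cos (q a) * (-Real.sin (q b) * (Pi.single i 1 : Fin 3 → ℝ) b) := by
  rw [HasFDerivAt.fderiv (f := fun p : Fin 3 → ℝ => Real.cos (p a) * Real.cos (p b)) ((hcos q a).mul (hcos q b))]; simp; ring

end helpers

lemma pd0 (q : Fin 3 → ℝ) : pd 0 S321 q =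
    !![0, 0, 0;
       0, -Real.sin (q 0), Real.cos (q 0) * Real.cos (q 1);
       0, -Real.cos (q 0), -Real.sin (q 0) * Real.cos (q 1)] := by
  ext j k
  fin_cases j <;> fin_cases k <;>
    simp [pd, S321, fd_neg_sin, fd_sin_cos, fd_cos_cos, fd_cos, fd_sin, Matrix.vecHead, Matrix.vecTail] <;> ring

lemma pd1 (q : Fin 3 → ℝ) : pd 1 S321 q =
    !![0, 0, -Real.cos (q 1);
       0, 0, -Real.sin (q 0) * Real.sin (q 1);
       0, 0, -Real.cos (q 0) * Real.sin (q 1)] := by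
  ext j k
  fin_cases j <;> fin_cases k <;>
    simp [pd, S321, fd_neg_sin, fd_sin_cos, fd_cos_cos, fd_cos, fd_sin, Matrix.vecHead, Matrix.vecTail] <;> ring

lemma pd2 (q : Fin 3 → ℝ) : pd 2 S321 q = 0 := by
  ext j k
  fin_cases j <;> fin_cases k <;>
    simp [pd, S321, fd_neg_sin, fd_sin_cos, fd_cos_cos, fd_cos, fd_sin, Matrix.vecHead, Matrix.vecTail]

theorem stmt_17 (q : Fin 3 → ℝ) (hq : Real.cos (q 1) ≠ 0) (v : Fin 3 → ℝ) :
    ∑ i : Fin 3, v i • pd i S321 q + crossMat (S321 q *ᵥ v) * S321 q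
      = colMat (pd 0 S321 q *ᵥ v) (pd 1 S321 q *ᵥ v) (pd 2 S321 q *ᵥ v) := by
  rw [Fin.sum_univ_three, pd0, pd1, pd2]
  ext i j
  fin_cases i <;> fin_cases j <;>
    simp [crossMat, colMat, S321, pd0, pd1, pd2, Matrix.mul_apply, Matrix.mulVec,
      dotProduct, Fin.sum_univ_three, Matrix.vecHead, Matrix.vecTail] <;>
    (first
      | ring1
      | linear_combination (-(Real.cos (q 1) * v 2)) * Real.sin_sq_add_cos_sq (q 0)
      | linear_combination (Real.cos (q 1) * v 2) * Real.sin_sq_add_cos_sq (q 0)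
      | linear_combination (v 1 * Real.cos (q 1)) * Real.sin_sq_add_cos_sq (q 0)
      | linear_combination (-(v 1 * Real.cos (q 1))) * Real.sin_sq_add_cos_sq (q 0)
      | linear_combination (Real.sin (q 1) * v 2) * Real.sin_sq_add_cos_sq (q 0)
      | linear_combination (-(Real.sin (q 1) * v 2)) * Real.sin_sq_add_cos_sq (q 0)
      | linear_combination (v 1 * Real.sin (q 1)) * Real.sin_sq_add_cos_sq (q 0)
      | linear_combination (-(v 1 * Real.sin (q 1))) * Real.sin_sq_add_cos_sq (q 0)
      | linear_combination (v 0) * Real.sin_sq_add_cos_sq (q 0)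
      | linear_combination (-(v 0)) * Real.sin_sq_add_cos_sq (q 0)
      | nlinarith [Real.sin_sq_add_cos_sq (q 0), Real.sin_sq_add_cos_sq (q 1)])
end
end
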